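/- arXiv:1709.02047 — 3 statements merged into one kernel-verified Lean document; each statement's English description precedes it below -/
import Mathlib

section
/- Let N be a positive integer and let f, g be N-times differentiable real functions on an open interval I. Then the alternating sum ∑_{k=0}^{N} (-1)^k C(N,k) g^k D^{N-1}(g^{N-k} f) is identically zero on I, where D^{N-1} denotes the (N-1)-st derivative. -/
/-!
Expanding the binomial shows that, at a fixed point `x`, the alternating sum is the `(N - 1)`-st
derivative of `y ↦ (g y - g x) ^ N * f y`. This function has a zero of order `N` at `x`, so by
the Leibniz rule all its derivatives of order `< N` vanish there.
-/

open Finset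

section

variable {𝕜 : Type*} [NontriviallyNormedField 𝕜] {𝔸 : Type*} [NormedRing 𝔸] [NormedAlgebra 𝕜 𝔸]

theorem iteratedDerivWithin_pow_mul_eq_zero {s : Set 𝕜} (hs : UniqueDiffOn 𝕜 s) {x : 𝕜}
    (hx : x ∈ s) {φ f : 𝕜 → 𝔸} (hφx : φ x = 0) {n j : ℕ} (hjn : j < n)
    (hφ : ContDiffWithinAt 𝕜 j φ s x) (hf : ContDiffWithinAt 𝕜 j f s x) :
    iteratedDerivWithin j (fun y => φ y ^ n * f y) s x = 0 := by
  induction n generalizing j with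
  | zero => omega
  | succ n ih =>
    have hsplit : (fun y => φ y ^ (n + 1) * f y) = φ * fun y => φ y ^ n * f y := by
      ext y; simp [pow_succ', mul_assoc]
    rw [hsplit, iteratedDerivWithin_mul hx hs hφ ((hφ.pow n).mul hf)]
    refine sum_eq_zero fun i hi => ?_
    rcases Nat.eq_zero_or_pos i with rfl | hi0
    · simp [hφx]
    · have hji : j - i < n := by rw [mem_range] at hi; omega
      have hle : ((j - i : ℕ) : WithTop ℕ∞) ≤ j := by exact_mod_cast j.sub_le i
      rw [ih hji (hφ.of_le hle) (hf.of_le hle), mul_zero]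

end

theorem alternating_sum_deriv_eq_zero_general
    (N : ℕ) (hN : 0 < N) (a b : ℝ)
    (I : Set ℝ) (hI : I = Set.Ioo a b)
    (f g : ℝ → ℝ) (hf : ContDiffOn ℝ N f I) (hg : ContDiffOn ℝ N g I) :
    ∀ x ∈ I, ∑ k ∈ Finset.range (N + 1),
      ((-1 : ℝ) ^ k * (N.choose k : ℝ) * (g x) ^ k *
        iteratedDerivWithin (N - 1) (fun y => (g y) ^ (N - k) * f y) I x) = 0 := by
  intro x hx
  have hs : UniqueDiffOn ℝ I := hI ▸ uniqueDiffOn_Ioo a b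
  have hle : ((N - 1 : ℕ) : WithTop ℕ∞) ≤ N := by exact_mod_cast N.sub_le 1
  have hφ : ContDiffWithinAt ℝ (N - 1 : ℕ) (fun y => g y - g x) I x :=
    ((hg.sub contDiffOn_const).of_le hle) x hx
  have hbinom : ∀ y, ∑ k ∈ range (N + 1), (-1 : ℝ) ^ k * N.choose k * g x ^ k *
      (g y ^ (N - k) * f y) = (g y - g x) ^ N * f y := fun y => by
    rw [sub_eq_neg_add, add_pow, sum_mul]
    exact sum_congr rfl fun k _ => by rw [neg_pow]; ring
  calc _ = ∑ k ∈ range (N + 1), iteratedDerivWithin (N - 1)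
          (fun y => (-1 : ℝ) ^ k * N.choose k * g x ^ k * (g y ^ (N - k) * f y)) I x := by
        simp only [iteratedDerivWithin_const_mul_field]
    _ = iteratedDerivWithin (N - 1) (fun y => (g y - g x) ^ N * f y) I x := by
        rw [← iteratedDerivWithin_fun_sum hx hs fun k _ =>
          contDiffWithinAt_const.mul ((((hg.pow _).mul hf).of_le hle) x hx)]
        simp only [hbinom]
    _ = 0 := iteratedDerivWithin_pow_mul_eq_zero hs hx (sub_self (g x)) (Nat.sub_lt hN one_pos) hφ
          ((hf.of_le hle) x hx)

/-- For a positive integer `N` and functions `f, g` that are `N`-times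
differentiable on an open interval `I ⊆ ℝ`, the alternating sum
`∑_{k=0}^{N} (-1)^k C(N,k) g^k D^{N-1}(g^{N-k} f)` vanishes identically on `I`. -/
theorem alternating_sum_deriv_eq_zero
    (N : ℕ) (hN : 0 < N) (a b : ℝ) (hab : a < b)
    (I : Set ℝ) (hI : I = Set.Ioo a b)
    (f g : ℝ → ℝ) (hf : ContDiffOn ℝ N f I) (hg : ContDiffOn ℝ N g I) :
    ∀ x ∈ I, ∑ k ∈ Finset.range (N + 1),
      ((-1 : ℝ) ^ k * (N.choose k : ℝ) * (g x) ^ k *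
        iteratedDerivWithin (N - 1) (fun y => (g y) ^ (N - k) * f y) I x) = 0 :=
  alternating_sum_deriv_eq_zero_general N hN a b I hI f g hf hg
end

section
/- Let N be a positive integer, I an open interval, and f, g functions on I that are N-times differentiable, with g nonvanishing on I. Then D^N(f/g) = ((-1)^N / g^{N+1}) · ∑_{k=0}^{N} (-1)^k C(N+1,k) g^k D^N(g^{N-k} f) on I. -/
/-!
With `c = g x`, the function `(g - c) ^ (N + 1) * (f / g)` vanishes to order `N + 1` at `x`, so its
`N`-th derivative at `x` is zero. Expanding `(g - c) ^ (N + 1)` binomially writes this function as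
`∑_{k ≤ N} (-1)^k C(N+1,k) c^k g^(N-k) f + (-c)^(N+1) f / g`; differentiating `N` times at `x`
gives a linear equation for `D^N(f/g)(x)` whose solution is the formula.
-/

open Finset

section VanishingOrder

variable {𝕜 : Type*} [NontriviallyNormedField 𝕜] {s : Set 𝕜} {x : 𝕜}

theorem derivWithin_pow_succ_mul {g ψ : 𝕜 → 𝕜} (hs : UniqueDiffOn 𝕜 s) (hx : x ∈ s)
    (hg : DifferentiableWithinAt 𝕜 g s x) (hψ : DifferentiableWithinAt 𝕜 ψ s x) (m : ℕ) :
    derivWithin (fun y => g y ^ (m + 1) * ψ y) s x =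
      g x ^ m * ((m + 1) * derivWithin g s x * ψ x + g x * derivWithin ψ s x) := by
  rw [((hg.hasDerivWithinAt.fun_pow (m + 1)).fun_mul hψ.hasDerivWithinAt).derivWithin
    (hs.uniqueDiffWithinAt hx)]
  push_cast
  ring

theorem iteratedDerivWithin_pow_mul_eq_zero_s1 (hs : UniqueDiffOn 𝕜 s) (hx : x ∈ s) {n m : ℕ}
    (hnm : n < m) {g ψ : 𝕜 → 𝕜} (hg : ContDiffOn 𝕜 n g s) (hψ : ContDiffOn 𝕜 n ψ s)
    (hgx : g x = 0) :
    iteratedDerivWithin n (fun y => g y ^ m * ψ y) s x = 0 := by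
  induction n generalizing m ψ with
  | zero => simp [hgx, zero_pow (by omega : m ≠ 0)]
  | succ n ih =>
    obtain ⟨m, rfl⟩ := Nat.exists_eq_succ_of_ne_zero (by omega : m ≠ 0)
    rw [Nat.cast_succ] at hg hψ
    obtain ⟨hgd, -, hg'⟩ := (contDiffOn_succ_iff_derivWithin hs).1 hg
    obtain ⟨hψd, -, hψ'⟩ := (contDiffOn_succ_iff_derivWithin hs).1 hψ
    have hgn : ContDiffOn 𝕜 n g s := hg.of_le (by norm_cast; omega)
    have hψn : ContDiffOn 𝕜 n ψ s := hψ.of_le (by norm_cast; omega)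
    rw [iteratedDerivWithin_succ', iteratedDerivWithin_congr
      (fun y hy => derivWithin_pow_succ_mul hs hy (hgd y hy) (hψd y hy) m) hx]
    exact ih (m := m) (by omega) hgn ((contDiffOn_const.mul hg').mul hψn |>.add (hgn.mul hψ'))

end VanishingOrder

theorem sub_pow_succ_mul_div {K : Type*} [Field K] {u : K} (hu : u ≠ 0) (c v : K) (N : ℕ) :
    (u - c) ^ (N + 1) * (v / u) =
      ∑ k ∈ range (N + 1), (-1) ^ k * ((N + 1).choose k : K) * c ^ k * (u ^ (N - k) * v) +
        (-1) ^ (N + 1) * c ^ (N + 1) * (v / u) := by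
  rw [show u - c = -c + u by ring, add_pow, sum_range_succ, add_mul, sum_mul]
  congr 1
  · refine sum_congr rfl fun k hk => ?_
    rw [show N + 1 - k = N - k + 1 by have := mem_range.1 hk; omega, pow_succ, neg_pow]
    field_simp
  · rw [neg_pow]; simp

theorem iteratedDeriv_div_formula_general
    (N : ℕ) (a b : ℝ)
    (I : Set ℝ) (hI : I = Set.Ioo a b)
    (f g : ℝ → ℝ) (hf : ContDiffOn ℝ N f I) (hg : ContDiffOn ℝ N g I)
    (hg0 : ∀ x ∈ I, g x ≠ 0) :
    ∀ x ∈ I, iteratedDerivWithin N (fun y => f y / g y) I x =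
      ((-1 : ℝ) ^ N / (g x) ^ (N + 1)) *
        ∑ k ∈ Finset.range (N + 1),
          ((-1 : ℝ) ^ k * ((N + 1).choose k : ℝ) * (g x) ^ k *
            iteratedDerivWithin N (fun y => (g y) ^ (N - k) * f y) I x) := by
  intro x hx
  have hs : UniqueDiffOn ℝ I := hI ▸ uniqueDiffOn_Ioo a b
  have hdiv : ContDiffOn ℝ N (fun y => f y / g y) I := hf.div hg hg0
  have hterm (k : ℕ) (c : ℝ) : ContDiffOn ℝ N (fun y => c * (g y ^ (N - k) * f y)) I :=
    contDiffOn_const.mul ((hg.pow _).mul hf)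
  have hvanish := iteratedDerivWithin_pow_mul_eq_zero_s1 hs hx N.lt_succ_self
    (hg.sub contDiffOn_const) hdiv (sub_self (g x))
  rw [iteratedDerivWithin_congr (fun y hy => sub_pow_succ_mul_div (hg0 y hy) (g x) (f y) N) hx,
    iteratedDerivWithin_fun_add hx hs ((ContDiffOn.sum fun k _ => hterm k _) x hx)
      ((contDiffOn_const.mul hdiv) x hx),
    iteratedDerivWithin_fun_sum hx hs fun k _ => hterm k _ x hx] at hvanish
  simp only [iteratedDerivWithin_const_mul_field] at hvanish
  have hsq : (-1 : ℝ) ^ N * (-1) ^ N = 1 := by rw [← mul_pow]; norm_num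
  rw [div_mul_eq_mul_div, eq_div_iff (pow_ne_zero _ (hg0 x hx))]
  linear_combination (-(-1 : ℝ) ^ N) * hvanish -
    (g x ^ (N + 1) * iteratedDerivWithin N (fun y => f y / g y) I x) * hsq

/-- Quotient rule in closed form: for `N ≥ 1`, `f, g` `N`-times differentiable
on an open interval `I` and `g` nonvanishing on `I`,
`D^N(f/g) = ((-1)^N / g^{N+1}) ∑_{k=0}^N (-1)^k C(N+1,k) g^k D^N(g^{N-k} f)` on `I`. -/
theorem iteratedDeriv_div_formula
    (N : ℕ) (hN : 0 < N) (a b : ℝ) (hab : a < b)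
    (I : Set ℝ) (hI : I = Set.Ioo a b)
    (f g : ℝ → ℝ) (hf : ContDiffOn ℝ N f I) (hg : ContDiffOn ℝ N g I)
    (hg0 : ∀ x ∈ I, g x ≠ 0) :
    ∀ x ∈ I, iteratedDerivWithin N (fun y => f y / g y) I x =
      ((-1 : ℝ) ^ N / (g x) ^ (N + 1)) *
        ∑ k ∈ Finset.range (N + 1),
          ((-1 : ℝ) ^ k * ((N + 1).choose k : ℝ) * (g x) ^ k *
            iteratedDerivWithin N (fun y => (g y) ^ (N - k) * f y) I x) :=
  iteratedDeriv_div_formula_general N a b I hI f g hf hg hg0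
end

section
/- In the Hardy–Sobolev space H²_β on the unit disk with norm ‖f‖²_β = |f(0)|² + ‖R^β f‖²_{H²}, the monomials z^k are orthogonal, and ‖z^k‖²_β = k^{2β} for k ≥ 1; consequently, the normalized reproducing kernels k_a = K_a/‖K_a‖ converge to 0 weakly as |a| → 1⁻ if and only if β ≤ 1/2. -/
/-!
With weights `w k = hsWeight β k`, the pairing of `K_a` with `f` is `∑ aᵏ fₖ` and
`‖K_a‖² = ∑ (w k)⁻¹ |a|²ᵏ`, so weak convergence of `k_a` depends only on whether
`∑ (w k)⁻¹ = ∑ k^(-2β)` converges, i.e. on whether `β > 1/2`.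
If it diverges, `‖K_a‖ → ∞` as `|a| → 1`; splitting `f` into a finite head and a small tail,
the head contributes `O(1/‖K_a‖)` and, by Cauchy–Schwarz, the tail at most its `H²_β` norm.
If it converges, `K_1 = ((w k)⁻¹)ₖ` lies in the space and `⟨k_r, K_1⟩ ≥ ‖K_r‖ ≥ 1` for real
`r ∈ [0, 1)`.
-/

open Filter

/-- The weight sequence of the Hardy–Sobolev space `H²_β` of the unit disk:
`w β 0 = 1` and `w β k = k^{2β}` for `k ≥ 1`. -/
noncomputable def hsWeight (β : ℝ) (k : ℕ) : ℝ :=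
  if k = 0 then 1 else (k : ℝ) ^ (2 * β)

/-- The `H²_β` inner product of two coefficient sequences,
`⟨f, g⟩_β = ∑_k w_β(k) conj(f_k) g_k` (conjugate linear in the first slot,
following Mathlib's convention). -/
noncomputable def hsInner (β : ℝ) (f g : ℕ → ℂ) : ℂ :=
  ∑' k : ℕ, (hsWeight β k : ℂ) * (starRingEnd ℂ) (f k) * g k

/-- The coefficient sequence of the monomial `z^m`. -/
def monomialCoeff (m : ℕ) : ℕ → ℂ := fun k => if k = m then 1 else 0

/-- The coefficient sequence of the reproducing kernel `K_a` of `H²_β` at `a ∈ 𝔻`: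
`K_a(z) = ∑_k w_β(k)⁻¹ conj(a)^k z^k`. -/
noncomputable def hsKernelCoeff (β : ℝ) (a : ℂ) : ℕ → ℂ :=
  fun k => ((hsWeight β k)⁻¹ : ℂ) * ((starRingEnd ℂ) a) ^ k

open Topology

section WeightedSequences

variable {ι : Type*}

theorem summable_mul_and_tsum_mul_le_sqrt_mul_sqrt {w x y : ι → ℝ} (hw : ∀ i, 0 < w i)
    (hx : ∀ i, 0 ≤ x i) (hy : ∀ i, 0 ≤ y i)
    (hxs : Summable fun i => w i * x i ^ 2) (hys : Summable fun i => (w i)⁻¹ * y i ^ 2) :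
    (Summable fun i => x i * y i) ∧
      ∑' i, x i * y i ≤ √(∑' i, w i * x i ^ 2) * √(∑' i, (w i)⁻¹ * y i ^ 2) := by
  have hu : ∀ i, (√(w i) * x i) ^ (2 : ℝ) = w i * x i ^ 2 := fun i => by
    rw [Real.rpow_two, mul_pow, Real.sq_sqrt (hw i).le]
  have hv : ∀ i, (y i / √(w i)) ^ (2 : ℝ) = (w i)⁻¹ * y i ^ 2 := fun i => by
    rw [Real.rpow_two, div_pow, Real.sq_sqrt (hw i).le, inv_mul_eq_div]
  have huv : ∀ i, √(w i) * x i * (y i / √(w i)) = x i * y i := fun i => by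
    have := Real.sqrt_pos.mpr (hw i)
    field_simp
  have holder := Real.summable_and_inner_le_Lp_mul_Lq_tsum_of_nonneg
    Real.HolderConjugate.two_two (f := fun i => √(w i) * x i) (g := fun i => y i / √(w i))
    (fun i => mul_nonneg (Real.sqrt_nonneg _) (hx i))
    (fun i => div_nonneg (hy i) (Real.sqrt_nonneg _))
    (by simpa only [hu] using hxs) (by simpa only [hv] using hys)
  simpa only [hu, hv, huv, ← Real.sqrt_eq_rpow] using holder

theorem tendsto_tsum_mul_pow_atTop_of_not_summable {c : ℕ → ℝ} (hc : ∀ k, 0 ≤ c k)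
    (hdiv : ¬ Summable c) (hgeom : ∀ r, 0 ≤ r → r < 1 → Summable fun k => c k * r ^ k) :
    Tendsto (fun r => ∑' k, c k * r ^ k) (𝓝[<] 1) atTop := by
  rw [tendsto_atTop]
  intro M
  have hpartial_sums := (not_summable_iff_tendsto_nat_atTop_of_nonneg hc).mp hdiv
  obtain ⟨N, hN⟩ := (hpartial_sums.eventually_gt_atTop M).exists
  have hpoly : Tendsto (fun r : ℝ => ∑ k ∈ Finset.range N, c k * r ^ k) (𝓝[<] 1)
      (𝓝 (∑ k ∈ Finset.range N, c k)) := by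
    have hcont : Continuous fun r : ℝ => ∑ k ∈ Finset.range N, c k * r ^ k := by fun_prop
    simpa using (hcont.tendsto 1).mono_left nhdsWithin_le_nhds
  filter_upwards [hpoly.eventually_const_lt hN, Ioo_mem_nhdsLT zero_lt_one] with r hr hr01
  exact hr.le.trans <| Summable.sum_le_tsum _
    (fun k _ => mul_nonneg (hc k) (pow_nonneg hr01.1.le k)) (hgeom r hr01.1.le hr01.2)

theorem norm_tsum_pow_mul_le {w : ℕ → ℝ} (hw : ∀ k, 0 < w k) {a : ℂ} (ha : ‖a‖ ≤ 1)
    (hgeom : Summable fun k => (w k)⁻¹ * (‖a‖ ^ 2) ^ k) {f : ℕ → ℂ}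
    (hf : Summable fun k => w k * ‖f k‖ ^ 2) (N : ℕ) :
    ‖∑' k, a ^ k * f k‖ ≤ ∑ k ∈ Finset.range N, ‖f k‖ +
      √(∑' k, w (k + N) * ‖f (k + N)‖ ^ 2) * √(∑' k, (w k)⁻¹ * (‖a‖ ^ 2) ^ k) := by
  have hsq : ∀ k, (‖a‖ ^ k) ^ 2 = (‖a‖ ^ 2) ^ k := fun k => by
    rw [← pow_mul, ← pow_mul, mul_comm]
  obtain ⟨htail_summable, htail⟩ := summable_mul_and_tsum_mul_le_sqrt_mul_sqrt
    (w := fun k => w (k + N)) (x := fun k => ‖f (k + N)‖) (y := fun k => ‖a‖ ^ (k + N))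
    (fun k => hw _) (fun _ => norm_nonneg _) (fun _ => by positivity)
    ((summable_nat_add_iff N).mpr hf)
    (by simpa only [hsq] using (summable_nat_add_iff N).mpr hgeom)
  have hnorm : ∀ k, ‖a ^ k * f k‖ = ‖f k‖ * ‖a‖ ^ k := fun k => by
    rw [norm_mul, norm_pow, mul_comm]
  have hsummable : Summable fun k => ‖a ^ k * f k‖ := by
    simpa only [hnorm] using
      (summable_nat_add_iff (f := fun k => ‖f k‖ * ‖a‖ ^ k) N).mp htail_summable
  have htail_le :
      ∑' k, (w (k + N))⁻¹ * (‖a‖ ^ (k + N)) ^ 2 ≤ ∑' k, (w k)⁻¹ * (‖a‖ ^ 2) ^ k := by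
    simp only [hsq]
    exact tsum_comp_le_tsum_of_inj hgeom
      (fun k => mul_nonneg (inv_nonneg.mpr (hw k).le) (by positivity)) (add_left_injective N)
  calc ‖∑' k, a ^ k * f k‖ ≤ ∑' k, ‖a ^ k * f k‖ := norm_tsum_le_tsum_norm hsummable
    _ = ∑ k ∈ Finset.range N, ‖f k‖ * ‖a‖ ^ k + ∑' k, ‖f (k + N)‖ * ‖a‖ ^ (k + N) := by
      simp only [hnorm] at hsummable ⊢
      exact (hsummable.sum_add_tsum_nat_add N).symm
    _ ≤ _ := by
      gcongr with k
      · exact mul_le_of_le_one_right (norm_nonneg _) (pow_le_one₀ (norm_nonneg _) ha)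
      · exact htail.trans (by gcongr)

theorem tendsto_tsum_pow_mul_div_sqrt_zero {w : ℕ → ℝ} (hw : ∀ k, 0 < w k)
    (hgeom : ∀ r, 0 ≤ r → r < 1 → Summable fun k => (w k)⁻¹ * r ^ k)
    (hdiv : ¬ Summable fun k => (w k)⁻¹) {l : Filter ι} {a : ι → ℂ} (ha : ∀ i, ‖a i‖ < 1)
    (ha1 : Tendsto (fun i => ‖a i‖) l (𝓝 1)) {f : ℕ → ℂ}
    (hf : Summable fun k => w k * ‖f k‖ ^ 2) :
    Tendsto (fun i => (∑' k, a i ^ k * f k) / (√(∑' k, (w k)⁻¹ * (‖a i‖ ^ 2) ^ k) : ℂ))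
      l (𝓝 0) := by
  have ha2 : ∀ i, ‖a i‖ ^ 2 < 1 := fun i => pow_lt_one₀ (norm_nonneg _) (ha i) two_ne_zero
  have hS : Tendsto (fun i => ∑' k, (w k)⁻¹ * (‖a i‖ ^ 2) ^ k) l atTop := by
    refine (tendsto_tsum_mul_pow_atTop_of_not_summable (fun k => (inv_pos.mpr (hw k)).le) hdiv
      hgeom).comp (tendsto_nhdsWithin_iff.mpr ⟨?_, .of_forall ha2⟩)
    simpa using ha1.pow 2
  have htail : Tendsto (fun N => √(∑' k, w (k + N) * ‖f (k + N)‖ ^ 2)) atTop (𝓝 0) := by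
    simpa using (tendsto_sum_nat_add fun k => w k * ‖f k‖ ^ 2).sqrt
  rw [NormedAddGroup.tendsto_nhds_zero]
  intro ε hε
  obtain ⟨N, hN⟩ := (htail.eventually_lt_const (half_pos hε)).exists
  set C := ∑ k ∈ Finset.range N, ‖f k‖
  filter_upwards [hS.eventually_gt_atTop ((2 * C / ε) ^ 2)] with i hi
  set S := ∑' k, (w k)⁻¹ * (‖a i‖ ^ 2) ^ k
  have hC : 0 ≤ C := Finset.sum_nonneg fun k _ => norm_nonneg _
  have hCS : 2 * C / ε < √S := Real.lt_sqrt (by positivity) |>.mpr hi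
  have hsqrtS : 0 < √S := (div_nonneg (by positivity) hε.le).trans_lt hCS
  rw [div_lt_iff₀ hε] at hCS
  rw [norm_div, Complex.norm_real, Real.norm_of_nonneg hsqrtS.le, div_lt_iff₀ hsqrtS]
  calc ‖∑' k, a i ^ k * f k‖
      ≤ C + √(∑' k, w (k + N) * ‖f (k + N)‖ ^ 2) * √S :=
        norm_tsum_pow_mul_le hw (ha i).le (hgeom _ (sq_nonneg _) (ha2 i)) hf N
    _ < ε / 2 * √S + ε / 2 * √S := by gcongr; linarith
    _ = ε * √S := by ring

theorem sqrt_inv_le_tsum_div_sqrt {w : ℕ → ℝ} (hw : ∀ k, 0 < w k) {r : ℝ} (hr0 : 0 ≤ r)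
    (hr1 : r ≤ 1) (hgeom : Summable fun k => (w k)⁻¹ * r ^ k) :
    √(w 0)⁻¹ ≤ (∑' k, (w k)⁻¹ * r ^ k) / √(∑' k, (w k)⁻¹ * (r ^ 2) ^ k) := by
  have hle : ∀ k, (w k)⁻¹ * (r ^ 2) ^ k ≤ (w k)⁻¹ * r ^ k := fun k =>
    mul_le_mul_of_nonneg_left (pow_le_pow_left₀ (by positivity) (sq_le hr0 hr1) k)
      (inv_pos.mpr (hw k)).le
  have hgeom2 : Summable fun k => (w k)⁻¹ * (r ^ 2) ^ k :=
    hgeom.of_nonneg_of_le (fun k => mul_nonneg (inv_pos.mpr (hw k)).le (by positivity)) hle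
  set S := ∑' k, (w k)⁻¹ * (r ^ 2) ^ k
  have hS : (w 0)⁻¹ ≤ S := by
    simpa using hgeom2.le_tsum 0 fun k _ => mul_nonneg (inv_pos.mpr (hw k)).le (by positivity)
  have hsqrtS : 0 < √S := Real.sqrt_pos.mpr ((inv_pos.mpr (hw 0)).trans_le hS)
  calc √(w 0)⁻¹ ≤ √S := Real.sqrt_le_sqrt hS
    _ = S / √S := Real.div_sqrt.symm
    _ ≤ _ := div_le_div_of_nonneg_right (hgeom2.tsum_le_tsum hle hgeom) hsqrtS.le

theorem forall_tendsto_tsum_pow_mul_div_sqrt_zero_iff {w : ℕ → ℝ} (hw : ∀ k, 0 < w k)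
    (hgeom : ∀ r, 0 ≤ r → r < 1 → Summable fun k => (w k)⁻¹ * r ^ k) :
    (∀ a : ℕ → ℂ, (∀ j, ‖a j‖ < 1) → Tendsto (fun j => ‖a j‖) atTop (𝓝 1) →
        ∀ f : ℕ → ℂ, Summable (fun k => w k * ‖f k‖ ^ 2) →
          Tendsto (fun j => (∑' k, a j ^ k * f k) / (√(∑' k, (w k)⁻¹ * (‖a j‖ ^ 2) ^ k) : ℂ))
            atTop (𝓝 0)) ↔ ¬ Summable fun k => (w k)⁻¹ := by
  refine ⟨fun H hsum => ?_, fun hdiv a ha ha1 f hf =>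
    tendsto_tsum_pow_mul_div_sqrt_zero hw hgeom hdiv ha ha1 hf⟩
  set r : ℕ → ℝ := fun j => j / (j + 1)
  have hr0 : ∀ j, 0 ≤ r j := fun j => by positivity
  have hr1 : ∀ j, r j < 1 := fun j => (div_lt_one (by positivity)).mpr (lt_add_one _)
  have hnorm : ∀ j, ‖(r j : ℂ)‖ = r j := fun j => by simp [hr0 j]
  have hf : Summable fun k => w k * ‖((w k)⁻¹ : ℂ)‖ ^ 2 := by
    refine hsum.congr fun k => ?_
    rw [← Complex.ofReal_inv, Complex.norm_real, Real.norm_of_nonneg (inv_pos.mpr (hw k)).le]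
    field_simp [(hw k).ne']
  have hlim := (H (fun j => (r j : ℂ)) (fun j => by rw [hnorm]; exact hr1 j)
    (by simp only [hnorm]; exact tendsto_natCast_div_add_atTop 1) _ hf).norm
  refine (Real.sqrt_pos.mpr (inv_pos.mpr (hw 0))).not_ge
    (ge_of_tendsto' (by simpa using hlim) fun j => ?_)
  have hpairing :
      ∑' k, (r j : ℂ) ^ k * ((w k : ℂ))⁻¹ = ((∑' k, (w k)⁻¹ * r j ^ k : ℝ) : ℂ) := by
    rw [Complex.ofReal_tsum]
    exact tsum_congr fun k => by push_cast; ring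
  rw [hpairing, Complex.norm_real, abs_of_nonneg (Real.sqrt_nonneg _), Real.norm_of_nonneg
    (tsum_nonneg fun k => mul_nonneg (inv_pos.mpr (hw k)).le (pow_nonneg (hr0 j) k))]
  exact sqrt_inv_le_tsum_div_sqrt hw (hr0 j) (hr1 j).le (hgeom _ (hr0 j) (hr1 j))

end WeightedSequences

theorem hsWeight_pos (β : ℝ) (k : ℕ) : 0 < hsWeight β k := by
  unfold hsWeight
  split_ifs
  · exact one_pos
  · positivity

theorem hsWeight_of_ne_zero (β : ℝ) {k : ℕ} (hk : k ≠ 0) : hsWeight β k = (k : ℝ) ^ (2 * β) :=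
  if_neg hk

theorem summable_hsWeight_inv_iff (β : ℝ) :
    Summable (fun k => (hsWeight β k)⁻¹) ↔ 1 / 2 < β := by
  have hcongr : (fun k => (hsWeight β k)⁻¹) =ᶠ[cofinite] fun k : ℕ => (k : ℝ) ^ (-(2 * β)) :=
    (eventually_cofinite_ne 0).mono fun k hk => by
      dsimp only
      rw [hsWeight_of_ne_zero β hk, Real.rpow_neg (Nat.cast_nonneg k)]
  rw [summable_congr_cofinite hcongr, Real.summable_nat_rpow]
  constructor <;> intro h <;> linarith

theorem summable_hsWeight_inv_mul_pow (β : ℝ) {r : ℝ} (hr : ‖r‖ < 1) :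
    Summable fun k => (hsWeight β k)⁻¹ * r ^ k := by
  refine .of_norm_bounded_eventually_nat
    (summable_norm_pow_mul_geometric_of_norm_lt_one ⌈-(2 * β)⌉₊ hr) ?_
  filter_upwards [eventually_ne_atTop 0] with k hk
  have hk1 : (1 : ℝ) ≤ k := Nat.one_le_cast.mpr (Nat.pos_of_ne_zero hk)
  rw [norm_mul, norm_mul, norm_inv, Real.norm_of_nonneg (hsWeight_pos β k).le,
    hsWeight_of_ne_zero β hk, ← Real.rpow_neg (Nat.cast_nonneg k), norm_pow, norm_pow,
    Real.norm_natCast]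
  refine mul_le_mul_of_nonneg_right ?_ (by positivity)
  rw [← Real.rpow_natCast]
  exact Real.rpow_le_rpow_of_exponent_le hk1 (Nat.le_ceil _)
theorem hsInner_monomialCoeff (β : ℝ) (m l : ℕ) :
    hsInner β (monomialCoeff m) (monomialCoeff l) = if m = l then (hsWeight β m : ℂ) else 0 := by
  unfold hsInner monomialCoeff
  rw [tsum_eq_single m fun k hk => by simp [hk]]
  simp

theorem hsInner_hsKernelCoeff (β : ℝ) (a : ℂ) (f : ℕ → ℂ) :
    hsInner β (hsKernelCoeff β a) f = ∑' k, a ^ k * f k := by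
  refine tsum_congr fun k => ?_
  have hw : (hsWeight β k : ℂ) ≠ 0 := Complex.ofReal_ne_zero.mpr (hsWeight_pos β k).ne'
  simp only [hsKernelCoeff, map_mul, map_pow, Complex.conj_conj, map_inv₀, Complex.conj_ofReal]
  field_simp

theorem tsum_hsWeight_mul_norm_hsKernelCoeff_sq (β : ℝ) (a : ℂ) :
    ∑' k, hsWeight β k * ‖hsKernelCoeff β a k‖ ^ 2 = ∑' k, (hsWeight β k)⁻¹ * (‖a‖ ^ 2) ^ k := by
  refine tsum_congr fun k => ?_
  have hw := (hsWeight_pos β k).ne'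
  rw [hsKernelCoeff, norm_mul, norm_pow, RCLike.norm_conj, norm_inv, Complex.norm_real,
    Real.norm_of_nonneg (hsWeight_pos β k).le]
  field_simp
  ring

/-- In `H²_β` on the unit disk (coefficient model), the monomials
`z^k` are orthogonal with `‖z^k‖²_β = k^{2β}` for `k ≥ 1`, and the normalized
reproducing kernels `k_a = K_a / ‖K_a‖` tend to `0` weakly as `|a| → 1⁻`
if and only if `β ≤ 1/2`. -/
theorem monomials_orthogonal_and_weak_convergence_iff (β : ℝ) :
    (∀ m l : ℕ, m ≠ l → hsInner β (monomialCoeff m) (monomialCoeff l) = 0) ∧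
    (∀ m : ℕ, 1 ≤ m → hsInner β (monomialCoeff m) (monomialCoeff m) = ((m : ℝ) ^ (2 * β) : ℝ)) ∧
    ((∀ (a : ℕ → ℂ), (∀ j, ‖a j‖ < 1) → Tendsto (fun j => ‖a j‖) atTop (nhds 1) →
        ∀ f : ℕ → ℂ, Summable (fun k => hsWeight β k * ‖f k‖ ^ 2) →
          Tendsto (fun j =>
              hsInner β (hsKernelCoeff β (a j)) f /
                (Real.sqrt (∑' k : ℕ, hsWeight β k * ‖hsKernelCoeff β (a j) k‖ ^ 2) : ℂ))
            atTop (nhds 0)) ↔ β ≤ 1 / 2) := by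
  refine ⟨fun m l hml => by rw [hsInner_monomialCoeff, if_neg hml],
    fun m hm => by rw [hsInner_monomialCoeff, if_pos rfl, hsWeight_of_ne_zero β (by omega)], ?_⟩
  simp only [hsInner_hsKernelCoeff, tsum_hsWeight_mul_norm_hsKernelCoeff_sq]
  rw [forall_tendsto_tsum_pow_mul_div_sqrt_zero_iff (hsWeight_pos β)
      fun r h0 h1 => summable_hsWeight_inv_mul_pow β (by rwa [Real.norm_of_nonneg h0]),
    summable_hsWeight_inv_iff, not_lt]
end
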